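/- arXiv:2503.19500 — 3 statements merged into one kernel-verified Lean document; each statement's English description precedes it below -/
import Mathlib

section
/- Let (h, e, f) be an sl2-triple in a finite-dimensional complex semisimple Lie algebra 𝔤, let 𝔤ᵢ be the ad h-eigenspace of eigenvalue i, and let L ⊆ 𝔤₁ be a Lagrangian subspace for the symplectic form B(x, y) = κ(f, [x, y]) on 𝔤₁. Then the subspace u = L ⊕ (⊕_{i ≥ 2} 𝔤ᵢ) is a Lie subalgebra of 𝔤, and this Lie subalgebra is nilpotent. -/
/-!
Grading `𝔤` by the natural eigenvalues of `ad h` gives `⁅𝔤ᵢ, 𝔤ⱼ⁆ ⊆ 𝔤ᵢ₊ⱼ`. Hence `u ⊆ 𝔤_{≥ 1}` and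
`⁅u, u⁆ ⊆ 𝔤_{≥ 2} ⊆ u`. Each `ad x` with `x ∈ 𝔤_{≥ 1}` raises the degree, and only finitely many
eigenvalues occur, so every `ad x` is nilpotent on `u` and Engel's theorem applies.
-/

open Module.End

namespace LieAlgebra

section CommRing

variable {R L : Type*} [CommRing R] [LieRing L] [LieAlgebra R L]

lemma lie_mem_eigenspace_ad_add (h : L) {μ ν : R} {x y : L}
    (hx : x ∈ eigenspace (ad R L h) μ) (hy : y ∈ eigenspace (ad R L h) ν) :
    ⁅x, y⁆ ∈ eigenspace (ad R L h) (μ + ν) := by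
  rw [mem_eigenspace_iff, ad_apply] at hx hy ⊢
  rw [leibniz_lie, hx, hy, smul_lie, lie_smul, add_smul]

variable (R) in
def eigenspacesGE (h : L) (a : ℕ) : Submodule R L :=
  ⨆ i : ℕ, ⨆ _ : a ≤ i, eigenspace (ad R L h) (i : R)

lemma eigenspace_le_eigenspacesGE (h : L) {a i : ℕ} (hi : a ≤ i) :
    eigenspace (ad R L h) (i : R) ≤ eigenspacesGE R h a :=
  le_iSup₂_of_le i hi le_rfl

lemma eigenspacesGE_antitone (h : L) : Antitone (eigenspacesGE R h) :=
  fun _ _ hab ↦ iSup₂_le fun _ hi ↦ eigenspace_le_eigenspacesGE h (hab.trans hi)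

lemma lie_mem_eigenspacesGE_add (h : L) {a b : ℕ} {x y : L}
    (hx : x ∈ eigenspacesGE R h a) (hy : y ∈ eigenspacesGE R h b) :
    ⁅x, y⁆ ∈ eigenspacesGE R h (a + b) := by
  rw [eigenspacesGE, iSup_subtype'] at hx hy
  induction hx using Submodule.iSup_induction' with
  | mem i x hx =>
    induction hy using Submodule.iSup_induction' with
    | mem j y hy =>
      refine eigenspace_le_eigenspacesGE h (Nat.add_le_add i.2 j.2) ?_
      exact_mod_cast lie_mem_eigenspace_ad_add h hx hy
    | zero => simp
    | add y₁ y₂ _ _ hy₁ hy₂ => simpa [lie_add] using Submodule.add_mem _ hy₁ hy₂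
  | zero => simp
  | add x₁ x₂ _ _ hx₁ hx₂ => simpa [add_lie] using Submodule.add_mem _ hx₁ hx₂

lemma ad_pow_mem_eigenspacesGE (h : L) {a : ℕ} {x y : L}
    (hx : x ∈ eigenspacesGE R h 1) (hy : y ∈ eigenspacesGE R h a) (m : ℕ) :
    (ad R L x ^ m) y ∈ eigenspacesGE R h (a + m) := by
  induction m with
  | zero => simpa using hy
  | succ m ih =>
    rw [pow_succ', mul_apply, ad_apply, ← add_assoc, add_comm _ 1]
    exact lie_mem_eigenspacesGE_add h hx ih

lemma sup_eigenspacesGE_two_le_one (h : L) {V : Submodule R L} (hV : V ≤ eigenspacesGE R h 1) :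
    V ⊔ eigenspacesGE R h 2 ≤ eigenspacesGE R h 1 :=
  sup_le hV (eigenspacesGE_antitone h one_le_two)

lemma lie_mem_sup_eigenspacesGE_two (h : L) {V : Submodule R L} (hV : V ≤ eigenspacesGE R h 1)
    {x y : L} (hx : x ∈ V ⊔ eigenspacesGE R h 2) (hy : y ∈ V ⊔ eigenspacesGE R h 2) :
    ⁅x, y⁆ ∈ V ⊔ eigenspacesGE R h 2 := by
  have hle := sup_eigenspacesGE_two_le_one h hV
  have hxy := lie_mem_eigenspacesGE_add h (hle hx) (hle hy)
  rw [one_add_one_eq_two] at hxy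
  exact Submodule.mem_sup_right hxy

def supEigenspacesGETwo (h : L) (V : Submodule R L) (hV : V ≤ eigenspacesGE R h 1) :
    LieSubalgebra R L where
  toSubmodule := V ⊔ eigenspacesGE R h 2
  lie_mem' := lie_mem_sup_eigenspacesGE_two h hV

end CommRing

section Field

variable {K L : Type*} [Field K] [CharZero K] [LieRing L] [LieAlgebra K L] [Module.Finite K L]

variable (K) in
lemma exists_eigenspacesGE_eq_bot (h : L) : ∃ M : ℕ, eigenspacesGE K h M = ⊥ := by
  obtain ⟨M, hM⟩ : BddAbove {i : ℕ | (ad K L h).HasEigenvalue (i : K)} :=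
    ((finite_hasEigenvalue (ad K L h)).preimage Nat.cast_injective.injOn).bddAbove
  refine ⟨M + 1, eq_bot_iff.mpr (iSup₂_le fun i hi ↦ ?_)⟩
  by_contra hne
  have : i ≤ M := hM (hasEigenvalue_iff.mpr (fun hbot ↦ hne (hbot ▸ le_rfl)))
  omega

lemma isNilpotent_of_le_eigenspacesGE_one (h : L) (H : LieSubalgebra K L)
    (hH : H.toSubmodule ≤ eigenspacesGE K h 1) : LieRing.IsNilpotent H := by
  obtain ⟨M, hM⟩ := exists_eigenspacesGE_eq_bot K h
  refine (isNilpotent_iff_forall (R := K)).mpr fun x ↦ ⟨M, LinearMap.ext fun y ↦ ?_⟩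
  have hmem := eigenspacesGE_antitone h (Nat.le_add_left M 1)
    (ad_pow_mem_eigenspacesGE h (hH x.2) (hH y.2) M)
  rw [hM, Submodule.mem_bot, ← H.coe_ad_pow] at hmem
  exact Subtype.ext hmem

end Field

end LieAlgebra

open LieAlgebra in
theorem lagrangian_sup_higher_weight_spaces_is_nilpotent_subalgebra_general
    (L : Type*) [LieRing L] [LieAlgebra ℂ L] [Module.Finite ℂ L]
    (h : L)
    (Lag : Submodule ℂ L)
    (hLag_le : Lag ≤ Module.End.eigenspace (LieAlgebra.ad ℂ L h) (1 : ℂ))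
    (u : Submodule ℂ L)
    (hu : u = Lag ⊔ ⨆ i : ℕ, ⨆ _ : 2 ≤ i,
      Module.End.eigenspace (LieAlgebra.ad ℂ L h) (i : ℂ)) :
    ∃ K : LieSubalgebra ℂ L, K.toSubmodule = u ∧ LieRing.IsNilpotent K := by
  have hLag : Lag ≤ eigenspacesGE ℂ h 1 :=
    hLag_le.trans (by simpa using eigenspace_le_eigenspacesGE (R := ℂ) h (le_refl 1))
  exact ⟨supEigenspacesGETwo h Lag hLag, hu.symm,
    isNilpotent_of_le_eigenspacesGE_one h _ (sup_eigenspacesGE_two_le_one h hLag)⟩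

/-- Let `(h, e, f)` be an `sl₂`-triple in a finite-dimensional complex semisimple Lie algebra
`𝔤`, let `𝔤ᵢ` be the `ad h`-eigenspace of eigenvalue `i`, and let `Lag ⊆ 𝔤₁` be a Lagrangian
subspace for the symplectic form `B(x, y) = κ(f, ⁅x, y⁆)` on `𝔤₁`.  Then the subspace
`u = Lag ⊕ (⊕_{i ≥ 2} 𝔤ᵢ)` is a Lie subalgebra of `𝔤`, and this Lie subalgebra is nilpotent. -/
theorem lagrangian_sup_higher_weight_spaces_is_nilpotent_subalgebra
    (L : Type*) [LieRing L] [LieAlgebra ℂ L] [Module.Finite ℂ L]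
    [LieAlgebra.IsSemisimple ℂ L]
    (h e f : L) (ht : IsSl2Triple h e f)
    (Lag : Submodule ℂ L)
    (hLag_le : Lag ≤ Module.End.eigenspace (LieAlgebra.ad ℂ L h) (1 : ℂ))
    (hLag : ∀ x ∈ Module.End.eigenspace (LieAlgebra.ad ℂ L h) (1 : ℂ),
      (x ∈ Lag ↔ ∀ y ∈ Lag, killingForm ℂ L f ⁅x, y⁆ = 0))
    (u : Submodule ℂ L)
    (hu : u = Lag ⊔ ⨆ i : ℕ, ⨆ _ : 2 ≤ i,
      Module.End.eigenspace (LieAlgebra.ad ℂ L h) (i : ℂ)) :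
    ∃ K : LieSubalgebra ℂ L, K.toSubmodule = u ∧ LieRing.IsNilpotent K :=
  lagrangian_sup_higher_weight_spaces_is_nilpotent_subalgebra_general L h Lag hLag_le u hu
end

section
/- Let (h, e, f) be an sl2-triple in a finite-dimensional complex semisimple Lie algebra 𝔤, let 𝔤ᵢ be the ad h-eigenspace of eigenvalue i, let L ⊆ 𝔤₁ be a Lagrangian subspace for the symplectic form B(x, y) = κ(f, [x, y]) on 𝔤₁, and let u = L ⊕ (⊕_{i ≥ 2} 𝔤ᵢ). Then the linear functional x ↦ κ(f, x) on u vanishes on the derived subalgebra [u, u]; that is, κ(f, [x, y]) = 0 for all x, y ∈ u. (Equivalently, x ↦ κ(f, x) is a Lie algebra character of u.) -/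
open Module.End LieAlgebra

/-- Bracket of eigenvectors of `ad h` is an eigenvector with summed eigenvalue. -/
lemma lie_mem_ad_eigenspace {L : Type*} [LieRing L] [LieAlgebra ℂ L]
    (h : L) {a b : ℂ} {x y : L}
    (hx : x ∈ Module.End.eigenspace (LieAlgebra.ad ℂ L h) a)
    (hy : y ∈ Module.End.eigenspace (LieAlgebra.ad ℂ L h) b) :
    ⁅x, y⁆ ∈ Module.End.eigenspace (LieAlgebra.ad ℂ L h) (a + b) := by
  rw [Module.End.mem_eigenspace_iff] at *
  simp only [LieAlgebra.ad_apply] at *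
  rw [leibniz_lie, hx, hy, smul_lie, lie_smul, add_smul]

/-- Eigenspaces of `ad h` with eigenvalues not summing to zero are Killing-orthogonal. -/
lemma killingForm_eq_zero_of_ad_eigen {L : Type*} [LieRing L] [LieAlgebra ℂ L]
    [Module.Finite ℂ L] (h : L) {a b : ℂ} (hab : a + b ≠ 0) {x y : L}
    (hx : x ∈ Module.End.eigenspace (LieAlgebra.ad ℂ L h) a)
    (hy : y ∈ Module.End.eigenspace (LieAlgebra.ad ℂ L h) b) :
    killingForm ℂ L x y = 0 := by
  rw [Module.End.mem_eigenspace_iff] at hx hy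
  simp only [LieAlgebra.ad_apply] at hx hy
  have key : killingForm ℂ L ⁅h, x⁆ y = - killingForm ℂ L x ⁅h, y⁆ :=
    LieModule.traceForm_apply_lie_apply' ℂ L L h x y
  rw [hx, hy, map_smul, LinearMap.smul_apply, map_smul, smul_eq_mul, smul_eq_mul,
    ← neg_mul] at key
  have : (a + b) * killingForm ℂ L x y = 0 := by linear_combination key
  exact (mul_eq_zero.mp this).resolve_left hab

/-- Let `(h, e, f)` be an `sl₂`-triple in a finite-dimensional complex semisimple Lie algebra
`𝔤`, let `𝔤ᵢ` be the `ad h`-eigenspace of eigenvalue `i`, let `Lag ⊆ 𝔤₁` be a Lagrangian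
subspace for the symplectic form `B(x, y) = κ(f, ⁅x, y⁆)` on `𝔤₁`, and let
`u = Lag ⊕ (⊕_{i ≥ 2} 𝔤ᵢ)`.  Then the linear functional `x ↦ κ(f, x)` on `u` vanishes on the
derived subalgebra `[u, u]`; that is, `κ(f, ⁅x, y⁆) = 0` for all `x, y ∈ u`. -/
theorem killing_form_f_vanishes_on_derived_subalgebra
    (L : Type*) [LieRing L] [LieAlgebra ℂ L] [Module.Finite ℂ L]
    [LieAlgebra.IsSemisimple ℂ L]
    (h e f : L) (ht : IsSl2Triple h e f)
    (Lag : Submodule ℂ L)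
    (hLag_le : Lag ≤ Module.End.eigenspace (LieAlgebra.ad ℂ L h) (1 : ℂ))
    (hLag : ∀ x ∈ Module.End.eigenspace (LieAlgebra.ad ℂ L h) (1 : ℂ),
      (x ∈ Lag ↔ ∀ y ∈ Lag, killingForm ℂ L f ⁅x, y⁆ = 0))
    (u : Submodule ℂ L)
    (hu : u = Lag ⊔ ⨆ i : ℕ, ⨆ _ : 2 ≤ i,
      Module.End.eigenspace (LieAlgebra.ad ℂ L h) (i : ℂ)) :
    ∀ x ∈ u, ∀ y ∈ u, killingForm ℂ L f ⁅x, y⁆ = 0 := by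
  have hf : f ∈ Module.End.eigenspace (LieAlgebra.ad ℂ L h) (-2 : ℂ) := by
    rw [Module.End.mem_eigenspace_iff, LieAlgebra.ad_apply, ht.lie_h_f_nsmul]
    module
  -- key: for eigenvectors x (eigenvalue a), y (eigenvalue b) with a + b ≠ 2, κ(f,⁅x,y⁆)=0
  have key : ∀ (a b : ℂ), a + b ≠ 2 → ∀ x ∈ Module.End.eigenspace (LieAlgebra.ad ℂ L h) a,
      ∀ y ∈ Module.End.eigenspace (LieAlgebra.ad ℂ L h) b, killingForm ℂ L f ⁅x, y⁆ = 0 := by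
    intro a b hab x hx y hy
    refine killingForm_eq_zero_of_ad_eigen h ?_ hf (lie_mem_ad_eigenspace h hx hy)
    intro H
    apply hab
    linear_combination H
  -- predicate submodules
  -- first: for fixed x, the set of y with κ(f,⁅x,y⁆)=0 is a submodule
  let Q : L → Submodule ℂ L := fun x =>
    { carrier := {y | killingForm ℂ L f ⁅x, y⁆ = 0}
      add_mem' := by intro y z hy hz; simp only [Set.mem_setOf_eq, lie_add, map_add] at *
                     rw [hy, hz, add_zero]
      zero_mem' := by simp
      smul_mem' := by intro c y hy; simp only [Set.mem_setOf_eq, lie_smul, map_smul] at *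
                      rw [hy, smul_zero] }
  let P : Submodule ℂ L :=
    { carrier := {x | u ≤ Q x}
      add_mem' := by
        intro x z hx hz
        intro y hy
        have h1 := hx hy; have h2 := hz hy
        simp only [Q, Submodule.mem_mk, AddSubmonoid.mem_mk, AddSubsemigroup.mem_mk,
          Set.mem_setOf_eq, add_lie, map_add] at *
        rw [h1, h2, add_zero]
      zero_mem' := by intro y hy; simp [Q]
      smul_mem' := by
        intro c x hx y hy
        have h1 := hx hy
        simp only [Q, Submodule.mem_mk, AddSubmonoid.mem_mk, AddSubsemigroup.mem_mk,
          Set.mem_setOf_eq, smul_lie, map_smul] at *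
        rw [h1, smul_zero] }
  suffices hP : u ≤ P by
    intro x hx y hy
    exact hP hx hy
  rw [hu]
  apply sup_le
  · -- x ∈ Lag
    intro x hx
    show u ≤ Q x
    rw [hu]
    apply sup_le
    · -- y ∈ Lag
      intro y hy
      exact ((hLag x (hLag_le hx)).mp hx) y hy
    · refine iSup_le fun i => iSup_le fun hi => ?_
      intro y hy
      show killingForm ℂ L f ⁅x, y⁆ = 0
      refine key 1 i ?_ x (hLag_le hx) y hy
      intro H
      have : (i : ℂ) = 1 := by linear_combination H
      have : i = 1 := by exact_mod_cast this
      omega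
  · refine iSup_le fun i => iSup_le fun hi => ?_
    intro x hx
    show u ≤ Q x
    rw [hu]
    apply sup_le
    · intro y hy
      show killingForm ℂ L f ⁅x, y⁆ = 0
      refine key i 1 ?_ x hx y (hLag_le hy)
      intro H
      have : (i : ℂ) = 1 := by linear_combination H
      have : i = 1 := by exact_mod_cast this
      omega
    · refine iSup_le fun j => iSup_le fun hj => ?_
      intro y hy
      show killingForm ℂ L f ⁅x, y⁆ = 0
      refine key i j ?_ x hx y hy
      intro H
      have : ((i + j : ℕ) : ℂ) = 2 := by push_cast; linear_combination H
      have : i + j = 2 := by exact_mod_cast this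
      omega
end

section
/- Let (h, e, f) be an sl2-triple in a finite-dimensional complex semisimple Lie algebra 𝔤. Then 𝔤 decomposes as the direct sum of the image of the operator ad f and the centralizer of e: 𝔤 = [f, 𝔤] ⊕ ker(ad e). (This is the transversality at f of the Slodowy slice f + ker(ad e) to the adjoint orbit of f.) -/
/-!
Write `E`, `F`, `H` for the actions of `e`, `f`, `h`. Since `E` shifts generalized
`H`-eigenvalues by `2` and `H` has finitely many eigenvalues, `E` is nilpotent. If `E (F y) = 0`
and `E ^ (j + 1) y = 0`, the commutation formula
`E ^ (j + 1) F = F E ^ (j + 1) + (j + 1) E ^ j (H + j)` gives `E ^ j ((H + j) y) = 0`, and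
`(H + j) y` again satisfies `E (F ·) = 0`; descending in `j`, the product
`(H + 2) (H + 3) ⋯ (H + j + 1)` kills `F y`. On `ker E` the eigenvalues of `H` are weights of
primitive vectors, hence natural numbers, so these factors are injective there and `F y = 0`.
Thus `range F ⊓ ker E = ⊥`; the same for the triple `(-h, f, e)` gives `range E ⊓ ker F = ⊥`, and
rank-nullity turns the two into complementarity.
-/

open LieModule Module.End Polynomial

lemma aeval_add_smul_one_ascPochhammer_succ {R A : Type*} [CommRing R] [Ring A] [Algebra R A]
    (a : A) (c : R) (n : ℕ) :
    aeval (a + c • 1) (ascPochhammer R (n + 1)) =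
      aeval (a + c • 1) (ascPochhammer R n) * (a + ((n : R) + c) • 1) := by
  rw [ascPochhammer_succ_right, map_mul, map_add, aeval_X, map_natCast, add_smul,
    Nat.cast_smul_eq_nsmul, nsmul_one]
  abel_nf

namespace IsSl2Triple

section CommRing

variable {R L M : Type*} [CommRing R] [LieRing L] [LieAlgebra R L]
  [AddCommGroup M] [Module R M] [LieRingModule L M] [LieModule R L M]
  {h e f : L}

lemma toEnd_h_mul_toEnd_e_sub (t : IsSl2Triple h e f) :
    toEnd R L M h * toEnd R L M e - toEnd R L M e * toEnd R L M h = (2 : R) • toEnd R L M e := by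
  ext m
  simp [← lie_lie, t.lie_h_e_smul R]

lemma toEnd_f_mul_toEnd_h_sub (t : IsSl2Triple h e f) :
    toEnd R L M f * toEnd R L M h - toEnd R L M h * toEnd R L M f = (2 : R) • toEnd R L M f := by
  ext m
  simp only [LinearMap.sub_apply, mul_apply, toEnd_apply_apply, LinearMap.smul_apply,
    ← lie_lie]
  rw [← lie_skew, neg_lie, t.lie_lie_smul_f R, neg_lie, neg_neg, smul_lie]

lemma toEnd_e_mul_toEnd_f_sub (t : IsSl2Triple h e f) :
    toEnd R L M e * toEnd R L M f - toEnd R L M f * toEnd R L M e = toEnd R L M h := by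
  ext m
  simp [← lie_lie, t.lie_e_f]

lemma semiconjBy_toEnd_e (t : IsSl2Triple h e f) (c : R) :
    SemiconjBy (toEnd R L M e) (toEnd R L M h + (c + 2) • 1) (toEnd R L M h + c • 1) := by
  have := t.toEnd_h_mul_toEnd_e_sub (R := R) (M := M)
  rw [SemiconjBy, mul_add, add_mul, mul_smul_comm, smul_mul_assoc, mul_one, one_mul, add_smul,
    ← this]
  abel

lemma semiconjBy_toEnd_f (t : IsSl2Triple h e f) (c : R) :
    SemiconjBy (toEnd R L M f) (toEnd R L M h + c • 1) (toEnd R L M h + (c + 2) • 1) := by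
  have := t.toEnd_f_mul_toEnd_h_sub (R := R) (M := M)
  rw [SemiconjBy, mul_add, add_mul, mul_smul_comm, smul_mul_assoc, mul_one, one_mul, add_smul,
    ← this]
  abel

lemma semiconjBy_pow_toEnd_e (t : IsSl2Triple h e f) (c : R) (k : ℕ) :
    SemiconjBy (toEnd R L M e ^ k) (toEnd R L M h + (c + 2 * k) • 1) (toEnd R L M h + c • 1) := by
  induction k generalizing c with
  | zero => simp
  | succ k ih =>
    rw [pow_succ', show c + 2 * ↑(k + 1) = (c + 2) + 2 * k by push_cast; ring]
    exact (t.semiconjBy_toEnd_e c).mul_left (ih (c + 2))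

lemma pow_succ_toEnd_e_mul_toEnd_f (t : IsSl2Triple h e f) (j : ℕ) :
    toEnd R L M e ^ (j + 1) * toEnd R L M f = toEnd R L M f * toEnd R L M e ^ (j + 1) +
      ((j : R) + 1) • (toEnd R L M e ^ j * (toEnd R L M h + (j : R) • 1)) := by
  have hEF := t.toEnd_e_mul_toEnd_f_sub (R := R) (M := M)
  have hHE (k : ℕ) := (t.semiconjBy_pow_toEnd_e (R := R) (M := M) 0 k).eq.symm
  set E := toEnd R L M e
  set F := toEnd R L M f
  set H := toEnd R L M h
  rw [sub_eq_iff_eq_add'] at hEF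
  simp only [zero_add, zero_smul, add_zero] at hHE
  induction j with
  | zero => simp [hEF]
  | succ j ih =>
    calc E ^ (j + 1 + 1) * F = E * (E ^ (j + 1) * F) := by rw [← mul_assoc, ← pow_succ']
      _ = E * F * E ^ (j + 1) + ((j : R) + 1) • (E ^ (j + 1) * (H + (j : R) • 1)) := by
        rw [ih, mul_add, mul_smul_comm, ← mul_assoc, ← mul_assoc, ← pow_succ']
      _ = F * E ^ (j + 1 + 1) +
          (H * E ^ (j + 1) + ((j : R) + 1) • (E ^ (j + 1) * (H + (j : R) • 1))) := by
        rw [hEF, add_mul, mul_assoc, ← pow_succ', add_assoc]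
      _ = _ := by
        rw [hHE, ← mul_smul_comm, ← mul_smul_comm, ← mul_add]
        congr 2
        push_cast
        module

lemma pow_toEnd_e_apply_mem_maxGenEigenspace (t : IsSl2Triple h e f) {μ : R} {y : M}
    (hy : y ∈ (toEnd R L M h).maxGenEigenspace μ) (k : ℕ) :
    (toEnd R L M e ^ k) y ∈ (toEnd R L M h).maxGenEigenspace (μ + 2 * k) := by
  obtain ⟨m, hm⟩ := (mem_maxGenEigenspace _ _ _).mp hy
  have key := ((t.semiconjBy_pow_toEnd_e (M := M) (-(μ + 2 * k)) k).pow_right m).eq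
  rw [show -(μ + 2 * k) + 2 * k = -μ by ring, neg_smul, ← sub_eq_add_neg, neg_smul,
    ← sub_eq_add_neg] at key
  exact (mem_maxGenEigenspace _ _ _).mpr ⟨m, by rw [← mul_apply, ← key,
    mul_apply, hm, map_zero]⟩

end CommRing

section Field

variable {K L M : Type*} [Field K] [CharZero K] [LieRing L] [LieAlgebra K L]
  [AddCommGroup M] [Module K M] [LieRingModule L M] [LieModule K L M]
  {h e f : L}

lemma aeval_ascPochhammer_apply_toEnd_f_eq_zero (t : IsSl2Triple h e f) {y : M}
    (hy : toEnd K L M e (toEnd K L M f y) = 0) {j : ℕ} (hj : (toEnd K L M e ^ j) y = 0) :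
    aeval (toEnd K L M h + (2 : K) • 1) (ascPochhammer K j) (toEnd K L M f y) = 0 := by
  induction j generalizing y with
  | zero => simp_all
  | succ j ih =>
    set y' := (toEnd K L M h + (j : K) • 1) y
    have hy' : toEnd K L M e (toEnd K L M f y') = 0 := by
      have := ((t.semiconjBy_toEnd_e (M := M) (j : K)).mul_left
        (t.semiconjBy_toEnd_f (M := M) (j : K))).eq
      rw [← mul_apply, ← mul_apply, this, mul_apply,
        mul_apply, hy, map_zero]
    have hj' : (toEnd K L M e ^ j) y' = 0 := by
      have := congr($(t.pow_succ_toEnd_e_mul_toEnd_f (R := K) (M := M) j) y)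
      rw [mul_apply, pow_succ, mul_apply, hy, map_zero, LinearMap.add_apply,
        mul_apply, ← pow_succ, hj, map_zero, zero_add, LinearMap.smul_apply,
        mul_apply, eq_comm, smul_eq_zero] at this
      exact this.resolve_left (Nat.cast_add_one_ne_zero j)
    have hFy' : toEnd K L M f y' = (toEnd K L M h + ((j : K) + 2) • 1) (toEnd K L M f y) := by
      rw [← mul_apply, (t.semiconjBy_toEnd_f (j : K)).eq, mul_apply]
    rw [aeval_add_smul_one_ascPochhammer_succ, mul_apply, ← hFy']
    exact ih hy' hj'

lemma eq_zero_of_toEnd_e_eq_zero_of_toEnd_h_add_eq_zero [FiniteDimensional K M]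
    (t : IsSl2Triple h e f) {m : M} (he : toEnd K L M e m = 0) (n : ℕ)
    (hh : (toEnd K L M h + ((n : K) + 1) • 1) m = 0) : m = 0 := by
  by_contra hm
  have P : t.HasPrimitiveVectorWith m (-((n : K) + 1)) :=
    { ne_zero := hm
      lie_h := by
        rw [LinearMap.add_apply, toEnd_apply_apply, add_eq_zero_iff_eq_neg] at hh
        rw [hh, LinearMap.smul_apply, one_apply, neg_smul]
      lie_e := he }
  obtain ⟨k, hk⟩ := P.exists_nat
  have : ((k + n + 1 : ℕ) : K) = 0 := by push_cast; linear_combination -hk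
  exact Nat.succ_ne_zero _ (Nat.cast_eq_zero.mp this)

lemma eq_zero_of_aeval_ascPochhammer_apply_eq_zero [FiniteDimensional K M]
    (t : IsSl2Triple h e f) {m : M} (he : toEnd K L M e m = 0) {N : ℕ}
    (hN : aeval (toEnd K L M h + (2 : K) • 1) (ascPochhammer K N) m = 0) : m = 0 := by
  induction N generalizing m with
  | zero => simpa using hN
  | succ N ih =>
    rw [aeval_add_smul_one_ascPochhammer_succ, mul_apply] at hN
    have he' : toEnd K L M e ((toEnd K L M h + ((N : K) + 2) • 1) m) = 0 := by
      rw [← mul_apply, (t.semiconjBy_toEnd_e (N : K)).eq, mul_apply, he,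
        map_zero]
    refine t.eq_zero_of_toEnd_e_eq_zero_of_toEnd_h_add_eq_zero he (N + 1) ?_
    rw [Nat.cast_succ, add_assoc, one_add_one_eq_two]
    exact ih he' hN

lemma exists_pow_toEnd_e_apply_eq_zero_of_mem_maxGenEigenspace [FiniteDimensional K M]
    (t : IsSl2Triple h e f) {μ : K} {y : M} (hy : y ∈ (toEnd K L M h).maxGenEigenspace μ) :
    ∃ N, (toEnd K L M e ^ N) y = 0 := by
  by_contra! hne
  have heig (k : ℕ) : (toEnd K L M h).HasEigenvalue (μ + 2 * k) :=
    (hasUnifEigenvalue_iff_hasUnifEigenvalue_one (by simp)).mp <|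
      (Submodule.ne_bot_iff _).mpr ⟨_, t.pow_toEnd_e_apply_mem_maxGenEigenspace hy k, hne k⟩
  have hinj : Function.Injective fun k : ℕ ↦ μ + 2 * (k : K) := fun i j hij ↦ by simpa using hij
  exact (Set.infinite_range_of_injective hinj).mono (Set.range_subset_iff.mpr heig)
    (toEnd K L M h).finite_hasEigenvalue

lemma maxGenEigenspace_toEnd_e_zero_eq_top [FiniteDimensional K M] [IsTriangularizable K L M]
    (t : IsSl2Triple h e f) : (toEnd K L M e).maxGenEigenspace 0 = ⊤ := by
  rw [eq_top_iff, ← IsTriangularizable.maxGenEigenspace_eq_top h, iSup_le_iff]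
  intro μ y hy
  obtain ⟨N, hN⟩ := t.exists_pow_toEnd_e_apply_eq_zero_of_mem_maxGenEigenspace hy
  exact (mem_maxGenEigenspace _ _ _).mpr ⟨N, by simpa using hN⟩

lemma disjoint_range_toEnd_f_ker_toEnd_e [FiniteDimensional K M] [IsTriangularizable K L M]
    (t : IsSl2Triple h e f) :
    Disjoint (LinearMap.range (toEnd K L M f)) (LinearMap.ker (toEnd K L M e)) := by
  rw [Submodule.disjoint_def]
  rintro _ ⟨y, rfl⟩ hx
  have hy : y ∈ (toEnd K L M e).maxGenEigenspace 0 := by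
    rw [t.maxGenEigenspace_toEnd_e_zero_eq_top]
    exact Submodule.mem_top
  obtain ⟨N, hN⟩ := (mem_maxGenEigenspace _ _ _).mp hy
  rw [zero_smul, sub_zero] at hN
  exact t.eq_zero_of_aeval_ascPochhammer_apply_eq_zero hx
    (t.aeval_ascPochhammer_apply_toEnd_f_eq_zero hx hN)

lemma isCompl_range_toEnd_f_ker_toEnd_e [FiniteDimensional K M] [IsTriangularizable K L M]
    (t : IsSl2Triple h e f) :
    IsCompl (LinearMap.range (toEnd K L M f)) (LinearMap.ker (toEnd K L M e)) := by
  have disj := t.disjoint_range_toEnd_f_ker_toEnd_e (K := K) (M := M)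
  have disj_symm := t.symm.disjoint_range_toEnd_f_ker_toEnd_e (K := K) (M := M)
  refine ⟨disj, codisjoint_iff.mpr (Submodule.eq_top_of_disjoint _ _ ?_ disj)⟩
  have rank_nullity_e := LinearMap.finrank_range_add_finrank_ker (toEnd K L M e)
  have rank_nullity_f := LinearMap.finrank_range_add_finrank_ker (toEnd K L M f)
  have rank_le := Submodule.finrank_add_finrank_le_of_disjoint disj_symm
  omega

end Field

end IsSl2Triple

theorem range_ad_f_isCompl_ker_ad_e_general
    (L : Type*) [LieRing L] [LieAlgebra ℂ L] [Module.Finite ℂ L]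
    (h e f : L) (ht : IsSl2Triple h e f) :
    IsCompl (LinearMap.range (LieAlgebra.ad ℂ L f))
      (LinearMap.ker (LieAlgebra.ad ℂ L e)) :=
  ht.isCompl_range_toEnd_f_ker_toEnd_e

/-- Let `(h, e, f)` be an `sl₂`-triple in a finite-dimensional complex semisimple Lie algebra
`𝔤`.  Then `𝔤` decomposes as the direct sum of the image of the operator `ad f` and the
centralizer of `e`: namely `𝔤 = ⁅f, 𝔤⁆ ⊕ ker (ad e)`.  (This is the transversality at `f` of the
Slodowy slice `f + ker (ad e)` to the adjoint orbit of `f`.) -/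
theorem range_ad_f_isCompl_ker_ad_e
    (L : Type*) [LieRing L] [LieAlgebra ℂ L] [Module.Finite ℂ L]
    [LieAlgebra.IsSemisimple ℂ L]
    (h e f : L) (ht : IsSl2Triple h e f) :
    IsCompl (LinearMap.range (LieAlgebra.ad ℂ L f))
      (LinearMap.ker (LieAlgebra.ad ℂ L e)) :=
  range_ad_f_isCompl_ker_ad_e_general L h e f ht
end
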